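/- Let {X_ℓ, F_ℓ} be an inverse sequence of compact metric spaces X_ℓ with upper semicontinuous set-valued bonding functions F_ℓ : X_{ℓ+1} ⊸ X_ℓ, and let (h_ℓ) be a sequence of continuous single-valued functions h_ℓ : ⋆_{i=1}^{ℓ+1}Γ(F_i⁻¹) → ⋆_{i=1}^{ℓ}Γ(F_i⁻¹) such that (1) h_1(x_1, x_2, x_3) ≠ (x_1, x_2) for each (x_1, x_2, x_3) ∈ ⋆_{i=1}^{2}Γ(F_i⁻¹), and (2) for each positive integer k and each (x_1, …, x_{k+3}) ∈ ⋆_{i=1}^{k+2}Γ(F_i⁻¹), if h_{k+1}(x_1, …, x_{k+3}) = (z_1, …, z_{k+2}), then h_k(x_1, …, x_{k+2}) = (z_1, …, z_{k+1}). Then the inverse limit lim⊸{X_ℓ, F_ℓ} does not have the fixed point property. -/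

import Mathlib

open Metric Filter Set Function

/-- The inverse limit of an inverse sequence `{X n, f n}` of spaces with
single-valued bonding maps `f n : X (n+1) → X n`. -/
def invLim (X : ℕ → Type*) (f : ∀ n, X (n + 1) → X n) : Set (∀ n, X n) :=
  {x | ∀ n, x n = f n (x (n + 1))}

/-- The inverse limit of an inverse sequence `{X n, F n}` of spaces with
set-valued bonding functions `F n : X (n+1) ⊸ X n`. -/
def invLimSV (X : ℕ → Type*) (F : ∀ n, X (n + 1) → Set (X n)) : Set (∀ n, X n) :=
  {x | ∀ n, x n ∈ F n (x (n + 1))}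

/-- A set-valued function is upper semicontinuous (with nonempty closed values):
all of its values are nonempty closed sets and its graph is closed. -/
def IsUSC {A B : Type*} [TopologicalSpace A] [TopologicalSpace B] (F : A → Set B) : Prop :=
  (∀ a, (F a).Nonempty) ∧ (∀ a, IsClosed (F a)) ∧ IsClosed {p : A × B | p.2 ∈ F p.1}

/-- The Mahavier product `⋆_{i=0}^{n-1} Γ(F_i⁻¹)`: all tuples `(x_0, …, x_n)`
with `x_i ∈ F i (x_{i+1})` for all `i < n`. -/
def mahavier (X : ℕ → Type*) (F : ∀ n, X (n + 1) → Set (X n)) (n : ℕ) :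
    Set (∀ i : Fin (n + 1), X i.1) :=
  {x | ∀ i : Fin n,
    x ⟨i.1, Nat.lt_succ_of_lt i.2⟩ ∈ F i.1 (x ⟨i.1 + 1, Nat.succ_lt_succ i.2⟩)}

/-- A space has the fixed point property if every continuous self-map has a fixed point. -/
def HasFPP (Z : Type*) [TopologicalSpace Z] : Prop :=
  ∀ g : Z → Z, Continuous g → ∃ p, g p = p

/-! The bonding maps `h_n` are coherent under truncation, so the coordinates
`g(x)_n := (h_n(x_1, …, x_{n+2}))_n` define a continuous self-map `g` of the inverse limit,
and every `h_n` agrees with `g` on truncations. A fixed point `p` of `g` would therefore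
satisfy `h_1(p_1, p_2, p_3) = (p_1, p_2)`, which condition (1) forbids. -/

section InducedMap

variable {X : ℕ → Type*} {F : ∀ n, X (n + 1) → Set (X n)}

def truncate (m : ℕ) (x : ∀ n, X n) : ∀ i : Fin (m + 1), X i.1 := fun i => x i

theorem truncate_mem_mahavier {x : ∀ n, X n} (hx : x ∈ invLimSV X F) (m : ℕ) :
    truncate m x ∈ mahavier X F m :=
  fun i => hx i

theorem continuous_truncate [∀ n, TopologicalSpace (X n)] (m : ℕ) :
    Continuous (truncate (X := X) m) :=
  continuous_pi fun _ => continuous_apply _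

variable (F) in
def IsCoherent (h : ∀ k : ℕ, (∀ i : Fin (k + 3), X i.1) → (∀ i : Fin (k + 2), X i.1)) :
    Prop :=
  ∀ j : ℕ, ∀ x ∈ mahavier X F (j + 3),
    (fun i : Fin (j + 2) => h (j + 1) x ⟨i.1, by omega⟩) =
      h j (fun i : Fin (j + 3) => x ⟨i.1, by omega⟩)

variable {h : ∀ k : ℕ, (∀ i : Fin (k + 3), X i.1) → (∀ i : Fin (k + 2), X i.1)}

variable (h) in
def inducedMap (x : ∀ n, X n) (n : ℕ) : X n :=
  h n (truncate (n + 2) x) ⟨n, by omega⟩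

theorem IsCoherent.apply_truncate_succ (hcoh : IsCoherent F h) {x : ∀ n, X n}
    (hx : x ∈ invLimSV X F) (n : ℕ) (i : Fin (n + 2)) :
    h (n + 1) (truncate (n + 3) x) ⟨i.1, by omega⟩ = h n (truncate (n + 2) x) i :=
  congrFun (hcoh n _ (truncate_mem_mahavier hx _)) i

theorem IsCoherent.apply_truncate_eq_inducedMap (hcoh : IsCoherent F h) {x : ∀ n, X n}
    (hx : x ∈ invLimSV X F) (n : ℕ) (i : Fin (n + 2)) :
    h n (truncate (n + 2) x) i = inducedMap h x i := by
  obtain ⟨i, hi⟩ := i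
  rcases Nat.lt_succ_iff_lt_or_eq.mp hi with hi | rfl
  · induction n with
    | zero => obtain rfl : i = 0 := (by omega); rfl
    | succ n ih =>
      rcases Nat.lt_succ_iff_lt_or_eq.mp hi with hi | rfl
      · exact (hcoh.apply_truncate_succ hx n ⟨i, by omega⟩).trans (ih (by omega) hi)
      · rfl
  · exact (hcoh.apply_truncate_succ hx n ⟨n + 1, hi⟩).symm

theorem IsCoherent.mapsTo_inducedMap (hcoh : IsCoherent F h)
    (hmaps : ∀ k, MapsTo (h k) (mahavier X F (k + 2)) (mahavier X F (k + 1))) :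
    MapsTo (inducedMap h) (invLimSV X F) (invLimSV X F) := by
  intro x hx n
  have hmem := hmaps (n + 1) (truncate_mem_mahavier hx (n + 3)) ⟨n, by omega⟩
  rwa [hcoh.apply_truncate_succ hx n ⟨n, by omega⟩] at hmem

theorem continuousOn_inducedMap [∀ n, TopologicalSpace (X n)]
    (hcont : ∀ k, ContinuousOn (h k) (mahavier X F (k + 2))) :
    ContinuousOn (inducedMap h) (invLimSV X F) :=
  continuousOn_pi.mpr fun n => (continuous_apply _).comp_continuousOn <|
    (hcont n).comp (continuous_truncate _).continuousOn fun _ hx => truncate_mem_mahavier hx _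

end InducedMap

theorem stmt19
    {X : ℕ → Type*} [∀ n, MetricSpace (X n)]
    (F : ∀ n, X (n + 1) → Set (X n))
    -- `h k` represents the continuous map `h_{k+1} : ⋆_{i=1}^{k+2}Γ(F_i⁻¹) → ⋆_{i=1}^{k+1}Γ(F_i⁻¹)`
    (h : ∀ k : ℕ, (∀ i : Fin (k + 3), X i.1) → (∀ i : Fin (k + 2), X i.1))
    (hcont : ∀ k, ContinuousOn (h k) (mahavier X F (k + 2)))
    (hmaps : ∀ k, MapsTo (h k) (mahavier X F (k + 2)) (mahavier X F (k + 1)))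
    -- (1)
    (h1 : ∀ x ∈ mahavier X F 2,
      h 0 x ≠ fun i : Fin 2 => x ⟨i.1, lt_of_lt_of_le i.2 (by omega)⟩)
    -- (2)
    (h2 : ∀ j : ℕ, ∀ x ∈ mahavier X F (j + 3),
      (fun i : Fin (j + 2) => h (j + 1) x ⟨i.1, lt_of_lt_of_le i.2 (by omega)⟩) =
        h j (fun i : Fin (j + 3) => x ⟨i.1, lt_of_lt_of_le i.2 (by omega)⟩)) :
    ¬ HasFPP ↥(invLimSV X F) := by
  intro hfpp
  have hcoh : IsCoherent F h := h2
  have hmapsTo := hcoh.mapsTo_inducedMap hmaps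
  obtain ⟨p, hp⟩ := hfpp _ ((continuousOn_inducedMap hcont).mapsToRestrict hmapsTo)
  have hfix : inducedMap h p = p := congrArg Subtype.val hp
  exact h1 _ (truncate_mem_mahavier p.2 2) <| funext fun i =>
    (hcoh.apply_truncate_eq_inducedMap p.2 0 i).trans (congrFun hfix i)
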